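/- (Identity behind Theorem 4) For every set Γ' ⊆ {1,…,q} with O_{Γ'}(r)ᵀO_{Γ'}(r) invertible, every k ≥ r−1, and every ρ ≥ 1, the consistency residual satisfies x̂_{Γ'}(ρ+1) − A x̂_{Γ'}(ρ) − B u_{k−r+ρ} = L_{Γ'} A_{k+ρ,Γ'} − A L_{Γ'} A_{k+ρ−1,Γ'}; consequently x̂_{Γ'}(ρ+1) − A x̂_{Γ'}(ρ) − B u_{k−r+ρ} = 0 if and only if L_{Γ'} A_{k+ρ,Γ'} − A L_{Γ'} A_{k+ρ−1,Γ'} = 0. -/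

import Mathlib

open Matrix

namespace SS

variable {n p q : ℕ}

/-- The matrix obtained from a matrix `M` with `q` rows by deleting the rows indexed by `S`. -/
def dele {m' : ℕ} (M : Matrix (Fin q) (Fin m') ℝ) (S : Finset (Fin q)) :
    Matrix {i : Fin q // i ∉ S} (Fin m') ℝ :=
  fun i j => M i.1 j

/-- The vector obtained from `v ∈ ℝ^q` by deleting the entries indexed by `S`. -/
def delv (v : Fin q → ℝ) (S : Finset (Fin q)) : {i : Fin q // i ∉ S} → ℝ :=
  fun i => v i.1

/-- A trajectory of the system `x_{k+1} = A x_k + B u_k`, `y_k = C x_k + a_k`. -/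
def Traj (A : Matrix (Fin n) (Fin n) ℝ) (B : Matrix (Fin n) (Fin p) ℝ)
    (C : Matrix (Fin q) (Fin n) ℝ) (x : ℕ → Fin n → ℝ) (u : ℕ → Fin p → ℝ)
    (a y : ℕ → Fin q → ℝ) : Prop :=
  (∀ k, x (k + 1) = A *ᵥ x k + B *ᵥ u k) ∧ ∀ k, y k = C *ᵥ x k + a k

/-- The stacked matrix `[M; MA; …; MA^{r-1}]`. -/
def stack (A : Matrix (Fin n) (Fin n) ℝ) {ι : Type} (M : Matrix ι (Fin n) ℝ)
    (r : ℕ) : Matrix (Fin r × ι) (Fin n) ℝ :=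
  fun i j => (M * A ^ (i.1 : ℕ)) i.2 j

/-- The pair `(A, M)` is observable: `[M; MA; …; MA^{n-1}]` has rank `n`. -/
def Observable (A : Matrix (Fin n) (Fin n) ℝ) {ι : Type} [Fintype ι]
    (M : Matrix ι (Fin n) ℝ) : Prop :=
  (stack A M n).rank = n

/-- `s`-sparse observability: `(A, C(Γ))` is observable for every `Γ` with `|Γ| = s`. -/
def SparseObs (A : Matrix (Fin n) (Fin n) ℝ) (C : Matrix (Fin q) (Fin n) ℝ)
    (s : ℕ) : Prop :=
  ∀ Γ : Finset (Fin q), Γ.card = s → Observable A (dele C Γ)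

/-- `O_S(r) = [C(S); C(S)A; …; C(S)A^{r-1}]`. -/
def Omat (A : Matrix (Fin n) (Fin n) ℝ) (C : Matrix (Fin q) (Fin n) ℝ)
    (S : Finset (Fin q)) (r : ℕ) :
    Matrix (Fin r × {i : Fin q // i ∉ S}) (Fin n) ℝ :=
  stack A (dele C S) r

/-- `L_S = (O_S(r)ᵀ O_S(r))⁻¹ O_S(r)ᵀ`. -/
noncomputable def Lmat (A : Matrix (Fin n) (Fin n) ℝ) (C : Matrix (Fin q) (Fin n) ℝ)
    (S : Finset (Fin q)) (r : ℕ) :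
    Matrix (Fin n) (Fin r × {i : Fin q // i ∉ S}) ℝ :=
  ((Omat A C S r)ᵀ * Omat A C S r)⁻¹ * (Omat A C S r)ᵀ

/-- Stacked output `Y_{k,S} = [y_{k-r+1}(S); …; y_k(S)]`. -/
def Yvec (y : ℕ → Fin q → ℝ) (S : Finset (Fin q)) (r k : ℕ) :
    Fin r × {i : Fin q // i ∉ S} → ℝ :=
  fun i => delv (y (k + 1 - r + (i.1 : ℕ))) S i.2

/-- Stacked attack `A_{k,S} = [a_{k-r+1}(S); …; a_k(S)]`. -/
def Avec (a : ℕ → Fin q → ℝ) (S : Finset (Fin q)) (r k : ℕ) :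
    Fin r × {i : Fin q // i ∉ S} → ℝ :=
  fun i => delv (a (k + 1 - r + (i.1 : ℕ))) S i.2

/-- Stacked input `U_{k-1} = [u_{k-r+1}; …; u_{k-1}]`. -/
def Uvec (u : ℕ → Fin p → ℝ) (r k : ℕ) : Fin (r - 1) × Fin p → ℝ :=
  fun i => u (k + 1 - r + (i.1 : ℕ)) i.2

/-- Block matrix `D_S`, with `(i, j)` block `C(S) A^{i-j-1} B` for `i > j` and `0` otherwise. -/
def Dmat (A : Matrix (Fin n) (Fin n) ℝ) (B : Matrix (Fin n) (Fin p) ℝ)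
    (C : Matrix (Fin q) (Fin n) ℝ) (S : Finset (Fin q)) (r : ℕ) :
    Matrix (Fin r × {i : Fin q // i ∉ S}) (Fin (r - 1) × Fin p) ℝ :=
  fun i j =>
    if (j.1 : ℕ) < (i.1 : ℕ) then
      (dele C S * A ^ ((i.1 : ℕ) - (j.1 : ℕ) - 1) * B) i.2 j.2
    else 0

/-- The minimal `r` such that `rank O_S(r) = n`. -/
noncomputable def rmin (A : Matrix (Fin n) (Fin n) ℝ) (C : Matrix (Fin q) (Fin n) ℝ)
    (S : Finset (Fin q)) : ℕ :=
  sInf {r : ℕ | (Omat A C S r).rank = n}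

/-- `b`: the maximum of `rmin` over all index sets of cardinality `s`. -/
noncomputable def bBound (A : Matrix (Fin n) (Fin n) ℝ) (C : Matrix (Fin q) (Fin n) ℝ)
    (s : ℕ) : ℕ :=
  (Finset.powersetCard s (Finset.univ : Finset (Fin q))).sup (rmin A C)

/-- Windowed least-squares estimate `x̂_S(m) = L_S (Y_{k+m-1,S} - D_S U_{k+m-2})`. -/
noncomputable def xhat (A : Matrix (Fin n) (Fin n) ℝ) (B : Matrix (Fin n) (Fin p) ℝ)
    (C : Matrix (Fin q) (Fin n) ℝ) (u : ℕ → Fin p → ℝ) (y : ℕ → Fin q → ℝ)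
    (S : Finset (Fin q)) (r k m : ℕ) : Fin n → ℝ :=
  Lmat A C S r *ᵥ (Yvec y S r (k + m - 1) - Dmat A B C S r *ᵥ Uvec u r (k + m - 1))

/-- The filtered index families `D_ς` of Algorithm 1. -/
def Dfam (A : Matrix (Fin n) (Fin n) ℝ) (B : Matrix (Fin n) (Fin p) ℝ)
    (C : Matrix (Fin q) (Fin n) ℝ) (u : ℕ → Fin p → ℝ) (y : ℕ → Fin q → ℝ)
    (s r k : ℕ) : ℕ → Set (Finset (Fin q))
  | 0 => {Γ' : Finset (Fin q) | Γ'.card = s}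
  | ς + 1 => {Γ' ∈ Dfam A B C u y s r k ς |
      xhat A B C u y Γ' r k (ς + 2) - A *ᵥ xhat A B C u y Γ' r k (ς + 1)
        - B *ᵥ u (k + 1 - r + ς) = 0}



private lemma mulVec_sum' {n m : ℕ} (M : Matrix (Fin n) (Fin m) ℝ) (s : Finset ℕ)
    (f : ℕ → Fin m → ℝ) : M *ᵥ (∑ j ∈ s, f j) = ∑ j ∈ s, M *ᵥ f j :=
  map_sum M.mulVecLin f s

private lemma dele_mul {m' m'' : ℕ} (M : Matrix (Fin q) (Fin m') ℝ)
    (N : Matrix (Fin m') (Fin m'') ℝ) (S : Finset (Fin q)) :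
    dele M S * N = dele (M * N) S := by
  ext i j
  simp [dele, Matrix.mul_apply]

private lemma state_evol {A : Matrix (Fin n) (Fin n) ℝ} {B : Matrix (Fin n) (Fin p) ℝ}
    {C : Matrix (Fin q) (Fin n) ℝ} {x : ℕ → Fin n → ℝ} {u : ℕ → Fin p → ℝ}
    {a y : ℕ → Fin q → ℝ} (hT : Traj A B C x u a y) (t : ℕ) :
    ∀ i : ℕ, x (t + i) =
      (A ^ i) *ᵥ x t + ∑ j ∈ Finset.range i, (A ^ (i - 1 - j) * B) *ᵥ u (t + j) := by
  intro i
  induction i with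
  | zero => simp
  | succ i ih =>
    have h1 : t + (i + 1) = (t + i) + 1 := by omega
    rw [h1, hT.1 (t + i), ih, Matrix.mulVec_add, Matrix.mulVec_mulVec,
      mulVec_sum', Finset.sum_range_succ]
    have h2 : ∀ j ∈ Finset.range i,
        A *ᵥ ((A ^ (i - 1 - j) * B) *ᵥ u (t + j)) = (A ^ (i + 1 - 1 - j) * B) *ᵥ u (t + j) := by
      intro j hj
      rw [Finset.mem_range] at hj
      rw [Matrix.mulVec_mulVec, ← Matrix.mul_assoc]
      have e : i + 1 - 1 - j = (i - 1 - j) + 1 := by omega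
      rw [e, pow_succ']
    rw [Finset.sum_congr rfl h2]
    have h3 : A * A ^ i = A ^ (i + 1) := (pow_succ' A i).symm
    have h4 : (A ^ (i + 1 - 1 - i) * B) *ᵥ u (t + i) = B *ᵥ u (t + i) := by
      simp
    rw [h3, h4]
    abel

private lemma Ydecomp {A : Matrix (Fin n) (Fin n) ℝ} {B : Matrix (Fin n) (Fin p) ℝ}
    {C : Matrix (Fin q) (Fin n) ℝ} {x : ℕ → Fin n → ℝ} {u : ℕ → Fin p → ℝ}
    {a y : ℕ → Fin q → ℝ} (hT : Traj A B C x u a y)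
    (S : Finset (Fin q)) (r K : ℕ) (hK : r ≤ K + 1) :
    Yvec y S r K - Dmat A B C S r *ᵥ Uvec u r K
      = Omat A C S r *ᵥ x (K + 1 - r) + Avec a S r K := by
  set T := K + 1 - r with hT'
  funext is
  obtain ⟨i, s⟩ := is
  have hy := hT.2 (T + i)
  have hx := state_evol hT T i
  have hO : (Omat A C S r *ᵥ x T) (i, s) = ((C * A ^ (i : ℕ)) *ᵥ x T) s.1 := by
    simp [Omat, stack, dele_mul, dele, Matrix.mulVec, dotProduct]
  have hD : (Dmat A B C S r *ᵥ Uvec u r K) (i, s)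
      = ∑ j ∈ Finset.range i, ((C * (A ^ ((i : ℕ) - 1 - j) * B)) *ᵥ u (T + j)) s.1 := by
    simp only [Matrix.mulVec, dotProduct, Dmat, Uvec, Fintype.sum_prod_type]
    rw [Fin.sum_univ_eq_sum_range
      (fun j => ∑ l, (if j < (i : ℕ) then (dele C S * A ^ ((i : ℕ) - j - 1) * B) s l else 0)
          * u (K + 1 - r + j) l) (r - 1)]
    have hsub : Finset.range (i : ℕ) ⊆ Finset.range (r - 1) := by
      apply Finset.range_subset_range.2
      have := i.2
      omega
    rw [← Finset.sum_subset hsub]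
    · apply Finset.sum_congr rfl
      intro j hj
      rw [Finset.mem_range] at hj
      simp only [if_pos hj]
      rw [dele_mul, dele_mul]
      have e : (i : ℕ) - j - 1 = (i : ℕ) - 1 - j := by omega
      rw [e]
      simp [dele, Matrix.mulVec, dotProduct, Matrix.mul_assoc]
      rw [hT']
    · intro j _ hj
      rw [Finset.mem_range] at hj
      push_neg at hj
      have hni : ¬ (j < (i : ℕ)) := by omega
      simp [hni]
  have hy2 : Yvec y S r K (i, s)
      = ((C * A ^ (i : ℕ)) *ᵥ x T) s.1
        + (∑ j ∈ Finset.range i, ((C * (A ^ ((i : ℕ) - 1 - j) * B)) *ᵥ u (T + j)) s.1)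
        + a (T + i) s.1 := by
    simp only [Yvec, delv]
    rw [show K + 1 - r + (i : ℕ) = T + i from rfl, hy]
    simp only [Pi.add_apply]
    rw [hx, Matrix.mulVec_add, Matrix.mulVec_mulVec, mulVec_sum']
    simp only [Pi.add_apply, Finset.sum_apply]
    congr 1
    congr 1
    apply Finset.sum_congr rfl
    intro j _
    rw [Matrix.mulVec_mulVec]
  show Yvec y S r K (i, s) - (Dmat A B C S r *ᵥ Uvec u r K) (i, s)
      = (Omat A C S r *ᵥ x T) (i, s) + Avec a S r K (i, s)
  rw [hy2, hD, hO]
  simp only [Avec, delv]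
  ring


private lemma xhat_eq {A : Matrix (Fin n) (Fin n) ℝ} {B : Matrix (Fin n) (Fin p) ℝ}
    {C : Matrix (Fin q) (Fin n) ℝ} {x : ℕ → Fin n → ℝ} {u : ℕ → Fin p → ℝ}
    {a y : ℕ → Fin q → ℝ} (hT : Traj A B C x u a y)
    (Γ' : Finset (Fin q)) (r k : ℕ) (hk : r ≤ k + 1)
    (hinv : IsUnit ((Omat A C Γ' r)ᵀ * Omat A C Γ' r)) (m : ℕ) (hm : 1 ≤ m) :
    xhat A B C u y Γ' r k m
      = x (k + m - r) + Lmat A C Γ' r *ᵥ Avec a Γ' r (k + m - 1) := by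
  have hK : r ≤ (k + m - 1) + 1 := by omega
  unfold xhat
  rw [Ydecomp hT Γ' r (k + m - 1) hK, Matrix.mulVec_add, Matrix.mulVec_mulVec]
  have hL : Lmat A C Γ' r * Omat A C Γ' r = 1 := by
    rw [Lmat, Matrix.mul_assoc]
    exact Matrix.nonsing_inv_mul _ ((Matrix.isUnit_iff_isUnit_det _).mp hinv)
  rw [hL, Matrix.one_mulVec]
  have e : k + m - 1 + 1 - r = k + m - r := by omega
  rw [e]

/-- identity behind Theorem 4: the consistency residual satisfies
`x̂_{Γ'}(ρ+1) - A x̂_{Γ'}(ρ) - B u_{k-r+ρ} = L_{Γ'} A_{k+ρ,Γ'} - A L_{Γ'} A_{k+ρ-1,Γ'}`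
for every `ρ ≥ 1` (indexed below by `ρ + 1` with `ρ ≥ 0`), together with the resulting
equivalence of vanishing. -/
theorem residual_identity
    (hn : 0 < n) (hp : 0 < p) (hq : 0 < q)
    (A : Matrix (Fin n) (Fin n) ℝ) (B : Matrix (Fin n) (Fin p) ℝ)
    (C : Matrix (Fin q) (Fin n) ℝ)
    (x : ℕ → Fin n → ℝ) (u : ℕ → Fin p → ℝ) (a y : ℕ → Fin q → ℝ)
    (hT : Traj A B C x u a y)
    (r k : ℕ) (hk : r ≤ k + 1)
    (Γ' : Finset (Fin q))
    (hinv : IsUnit ((Omat A C Γ' r)ᵀ * Omat A C Γ' r)) :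
    ∀ ρ : ℕ,
      (xhat A B C u y Γ' r k (ρ + 2) - A *ᵥ xhat A B C u y Γ' r k (ρ + 1)
          - B *ᵥ u (k + 1 - r + ρ) =
        Lmat A C Γ' r *ᵥ Avec a Γ' r (k + ρ + 1)
          - A *ᵥ (Lmat A C Γ' r *ᵥ Avec a Γ' r (k + ρ))) ∧
      (xhat A B C u y Γ' r k (ρ + 2) - A *ᵥ xhat A B C u y Γ' r k (ρ + 1)
          - B *ᵥ u (k + 1 - r + ρ) = 0 ↔
        Lmat A C Γ' r *ᵥ Avec a Γ' r (k + ρ + 1)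
          - A *ᵥ (Lmat A C Γ' r *ᵥ Avec a Γ' r (k + ρ)) = 0) := by
  intro ρ
  have h1 := xhat_eq hT Γ' r k hk hinv (ρ + 2) (by omega)
  have h2 := xhat_eq hT Γ' r k hk hinv (ρ + 1) (by omega)
  have e1 : k + (ρ + 2) - 1 = k + ρ + 1 := by omega
  have e2 : k + (ρ + 1) - 1 = k + ρ := by omega
  rw [e1] at h1
  rw [e2] at h2
  have key : xhat A B C u y Γ' r k (ρ + 2) - A *ᵥ xhat A B C u y Γ' r k (ρ + 1)
      - B *ᵥ u (k + 1 - r + ρ)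
      = Lmat A C Γ' r *ᵥ Avec a Γ' r (k + ρ + 1)
        - A *ᵥ (Lmat A C Γ' r *ᵥ Avec a Γ' r (k + ρ)) := by
    rw [h1, h2, Matrix.mulVec_add]
    have hs := hT.1 (k + 1 - r + ρ)
    have e3 : k + (ρ + 2) - r = (k + 1 - r + ρ) + 1 := by omega
    have e4 : k + (ρ + 1) - r = k + 1 - r + ρ := by omega
    rw [e3, e4, hs]
    abel
  exact ⟨key, by rw [key]⟩

end SS
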